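/- arXiv:1705.06134 — 4 statements merged into one kernel-verified Lean document; each statement's English description precedes it below -/
import Mathlib

section
/- Let D be an integrally closed integral domain and M an n × n matrix over D. Then the null ideal N_D(M) = {f(T) ∈ D[T] : f(M) = 0} is a principal ideal of the polynomial ring D[T]. -/
/-!
Over `K = Frac D`, the null ideal of `M` is generated by the minimal polynomial `μ` of `M`.
Since `μ` divides the characteristic polynomial (Cayley–Hamilton), which is monic with coefficients in `D`,
Gauss's lemma for the integrally closed domain `D` puts `μ` in `D[T]`; and divisibility by a
monic polynomial of `D[T]` is the same over `D` and over `K`, so `μ` also generates the null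
ideal over `D`.
-/

open Polynomial

section

variable {D K : Type*} [CommRing D] [Field K] [Algebra D K] [IsFractionRing D K]

theorem IsIntegrallyClosed.exists_monic_map_eq_minpoly [IsDomain D] [IsIntegrallyClosed D]
    {B : Type*} [Ring B] [Algebra K B] [Algebra D B] [IsScalarTower D K B]
    {y : B} (hy : IsIntegral D y) :
    ∃ g : D[X], g.Monic ∧ g.map (algebraMap D K) = minpoly K y := by
  have hμ : (minpoly K y).Monic := minpoly.monic (hy.tower_top (A := K))
  obtain ⟨p, hp, hpy⟩ := hy
  have hdvd : minpoly K y ∣ p.map (algebraMap D K) :=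
    minpoly.dvd K y (by rwa [aeval_map_algebraMap])
  obtain ⟨g, hg⟩ := IsIntegrallyClosed.eq_map_mul_C_of_dvd K hp hdvd
  rw [hμ.leadingCoeff, C_1, mul_one] at hg
  exact ⟨g, monic_of_injective (IsFractionRing.injective D K) (hg ▸ hμ), hg⟩

theorem ker_aeval_eq_span_of_map_eq_minpoly
    {A B : Type*} [Ring A] [Algebra D A] [Ring B] [Algebra K B] [Algebra D B]
    [IsScalarTower D K B] (ι : A →ₐ[D] B) (hι : Function.Injective ι) {x : A} {g : D[X]}
    (hg : g.Monic) (hgx : g.map (algebraMap D K) = minpoly K (ι x)) :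
    RingHom.ker (aeval x) = Ideal.span {g} := by
  ext f
  rw [RingHom.mem_ker, Ideal.mem_span_singleton,
    ← map_dvd_map (algebraMap D K) (IsFractionRing.injective D K) hg, hgx, minpoly.dvd_iff,
    aeval_map_algebraMap, aeval_algHom_apply, map_eq_zero_iff ι hι]

end

theorem null_ideal_isPrincipal_of_integrallyClosed_general
    (D : Type*) [CommRing D] [IsDomain D] [IsIntegrallyClosed D]
    (n : ℕ) (M : Matrix (Fin n) (Fin n) D) :
    (RingHom.ker (Polynomial.aeval M : Polynomial D →ₐ[D] Matrix (Fin n) (Fin n) D)).IsPrincipal := by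
  let ι := (Algebra.ofId D (FractionRing D)).mapMatrix (m := Fin n)
  have hι : Function.Injective ι := Matrix.map_injective (IsFractionRing.injective D _)
  obtain ⟨g, hg, hgM⟩ :=
    IsIntegrallyClosed.exists_monic_map_eq_minpoly (K := FractionRing D) (M.isIntegral.map ι)
  exact ⟨g, ker_aeval_eq_span_of_map_eq_minpoly ι hι hg hgM⟩

/-- The null ideal `{f ∈ D[T] : f(M) = 0}` of a square matrix `M` over an integrally
closed domain `D` is a principal ideal of `D[T]`. -/
theorem null_ideal_isPrincipal_of_integrallyClosed
    (D : Type*) [CommRing D] [IsDomain D] [IsIntegrallyClosed D]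
    (n : ℕ) (hn : 1 ≤ n) (M : Matrix (Fin n) (Fin n) D) :
    (RingHom.ker (Polynomial.aeval M : Polynomial D →ₐ[D] Matrix (Fin n) (Fin n) D)).IsPrincipal :=
  null_ideal_isPrincipal_of_integrallyClosed_general D n M
end

section
/- Let M be an n × n matrix with integer entries and let m ∈ ℤ[T] be the monic minimal polynomial of M over ℚ (which has integer coefficients). Then for all but finitely many prime numbers p, the reduction of m modulo p equals the minimal polynomial over the field ℤ/pℤ of the reduction M₍p₎ of M modulo p. -/
/-!
Let `d = deg m`. Over `ℚ` the powers `1, M, …, M^(d-1)` are linearly independent, so the Gram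
matrix `G = Aᵀ A` of the matrix `A` with their entry vectors as columns has nonzero integer
determinant (over an ordered field, `Aᵀ A x = 0` forces `|A x|² = 0`). For every prime `p ∤ det G` the reduction of `G` is invertible,
so these powers stay independent over `ℤ/pℤ`; as `m mod p` is monic of degree `d` and annihilates
`M₍p₎`, it is the minimal polynomial of `M₍p₎`.
-/

open Polynomial Matrix

namespace Matrix

variable {ι κ m R : Type*}

theorem linearIndependent_col_of_isUnit_det_transpose_mul_self [CommRing R] [Fintype ι]
    [Fintype κ] [DecidableEq κ] {A : Matrix ι κ R} (h : IsUnit (Aᵀ * A).det) :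
    LinearIndependent R A.col :=
  mulVec_injective_iff.mp fun x y hxy =>
    mulVec_injective_of_isUnit ((isUnit_iff_isUnit_det _).mpr h) <| by
      simp only [← mulVec_mulVec, hxy]

theorem det_transpose_mul_self_ne_zero [Field R] [LinearOrder R] [IsStrictOrderedRing R]
    [Fintype ι] [Fintype κ] [DecidableEq κ] {A : Matrix ι κ R} (h : LinearIndependent R A.col) :
    (Aᵀ * A).det ≠ 0 := by
  rw [← isUnit_iff_ne_zero, ← isUnit_iff_isUnit_det, ← mulVec_injective_iff_isUnit,
    ← coe_mulVecLin, ← LinearMap.ker_eq_bot, ker_mulVecLin_transpose_mul_self,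
    LinearMap.ker_eq_bot, coe_mulVecLin, mulVec_injective_iff]
  exact h

theorem linearIndependent_vec_iff [CommRing R] [Fintype κ] {A : κ → Matrix ι m R} :
    LinearIndependent R (fun k => (A k).vec) ↔ LinearIndependent R A := by
  simp only [Fintype.linearIndependent_iff, ← vec_smul, ← vec_sum, vec_eq_zero_iff]

theorem aeval_map_intCast [CommRing R] [Fintype m] [DecidableEq m] (M : Matrix m m ℤ)
    (q : ℤ[X]) :
    aeval (M.map ((↑) : ℤ → R)) (q.map (Int.castRingHom R)) = (aeval M q).map (↑) := by
  rw [← algebraMap_int_eq, aeval_map_algebraMap]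
  exact aeval_algHom_apply (Algebra.ofId ℤ R).mapMatrix M q

end Matrix

theorem finite_setOf_prime_not_linearIndependent_zmod {ι κ : Type*} [Fintype ι] [Fintype κ]
    [DecidableEq κ] (v : κ → ι → ℤ) (hv : LinearIndependent ℚ fun k => ((↑) : ℤ → ℚ) ∘ v k) :
    {p : ℕ | p.Prime ∧ ¬LinearIndependent (ZMod p) fun k => ((↑) : ℤ → ZMod p) ∘ v k}.Finite := by
  set A : Matrix ι κ ℤ := (of v)ᵀ
  have hcast : ∀ (R : Type) [CommRing R], (Int.cast (Aᵀ * A).det : R) =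
      ((A.map ((↑) : ℤ → R))ᵀ * A.map ((↑) : ℤ → R)).det := by
    intro R _
    refine ((Int.castRingHom R).map_det _).trans ?_
    rw [RingHom.mapMatrix_apply, Matrix.map_mul, transpose_map]
    rfl
  have hD : (Aᵀ * A).det ≠ 0 := by
    have := det_transpose_mul_self_ne_zero (A := A.map ((↑) : ℤ → ℚ)) hv
    rw [← hcast] at this
    exact_mod_cast this
  refine (Set.finite_mem_finset (Aᵀ * A).det.natAbs.primeFactors).subset ?_
  rintro p ⟨hp, hdep⟩
  have : Fact p.Prime := ⟨hp⟩
  refine Nat.mem_primeFactors.mpr ⟨hp, ?_, by simpa using hD⟩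
  rw [← Int.natCast_dvd, ← ZMod.intCast_zmod_eq_zero_iff_dvd, hcast]
  by_contra hne
  exact hdep (linearIndependent_col_of_isUnit_det_transpose_mul_self (isUnit_iff_ne_zero.mpr hne))

/-- Let `m ∈ ℤ[T]` be the monic minimal polynomial over `ℚ` of an integer matrix `M`.
For all but finitely many primes `p`, the reduction of `m` mod `p` is the minimal
polynomial over `ℤ/pℤ` of the reduction of `M` mod `p`. -/
theorem minpoly_mod_p_eq_for_all_but_finitely_many_primes
    (n : ℕ) (M : Matrix (Fin n) (Fin n) ℤ) (m : Polynomial ℤ) (hmonic : m.Monic)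
    (hm : m.map (Int.castRingHom ℚ) = minpoly ℚ (M.map (Int.cast : ℤ → ℚ))) :
    {p : ℕ | p.Prime ∧
        m.map (Int.castRingHom (ZMod p)) ≠
          minpoly (ZMod p) (M.map (Int.cast : ℤ → ZMod p))}.Finite := by
  have hvec : ∀ (R : Type) [CommRing R] (i : ℕ),
      ((↑) : ℤ → R) ∘ (M ^ i).vec = ((M.map ((↑) : ℤ → R)) ^ i).vec := fun R _ i =>
    congrArg vec (Matrix.map_pow M (Int.castRingHom R) i)
  have hMm : aeval M m = 0 := by
    have := minpoly.aeval ℚ (M.map ((↑) : ℤ → ℚ))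
    rwa [← hm, aeval_map_intCast, ← Matrix.map_zero _ Int.cast_zero,
      (Matrix.map_injective Int.cast_injective).eq_iff] at this
  have hindep : LinearIndependent ℚ fun i : Fin m.natDegree =>
      ((↑) : ℤ → ℚ) ∘ (M ^ (i : ℕ)).vec := by
    have := linearIndependent_pow (K := ℚ) (M.map ((↑) : ℤ → ℚ))
    rw [← hm, hmonic.natDegree_map, ← linearIndependent_vec_iff] at this
    simpa only [hvec] using this
  refine (finite_setOf_prime_not_linearIndependent_zmod _ hindep).subset ?_
  rintro p ⟨hp, hne⟩
  refine ⟨hp, fun hindep_p => hne ?_⟩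
  have : Fact p.Prime := ⟨hp⟩
  refine (minpoly.eq_of_linearIndependent _ _ (hmonic.map _) ?_ m.natDegree ?_ ?_).symm
  · rw [aeval_map_intCast, hMm, Matrix.map_zero _ Int.cast_zero]
  · rw [hmonic.degree_map, degree_eq_natDegree hmonic.ne_zero]
  · simpa only [hvec, linearIndependent_vec_iff] using hindep_p
end

section
/- Let A be a nonzero ideal of 𝒪_K and S a finite set of rational primes containing every prime divisor of the absolute norm N(A). Then there exists a pair (a, α), with a a positive integer and α ∈ 𝒪_K, which is an S-normal presentation of A. -/
open NumberField

variable {K : Type*} [Field K] [NumberField K]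

/-- `vQ Q A` is the multiplicity of the prime ideal `Q` in the factorization of the
ideal `A` of the ring of integers. -/
noncomputable def vQ (Q A : Ideal (𝓞 K)) : ℕ :=
  letI := Classical.decEq (Ideal (𝓞 K))
  Multiset.count Q (UniqueFactorizationMonoid.normalizedFactors A)

/-- `(a, α)` is an `S`-normal presentation of the nonzero ideal `A` of `𝓞 K`:
`a` is a positive integer in `A ∩ ℤ`, `α ∈ A`, for every nonzero prime ideal `Q` lying over a
rational prime `p ∉ S` we have `v_Q(a) = v_Q(A) = 0`, and for every nonzero prime ideal `Q`
lying over a rational prime `p ∈ S` we have `v_Q(α) = v_Q(A)`. -/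
def IsSNormalPresentation (S : Finset ℕ) (A : Ideal (𝓞 K)) (a : ℕ) (α : 𝓞 K) : Prop :=
  0 < a ∧ (a : 𝓞 K) ∈ A ∧ α ∈ A ∧
    (∀ Q : Ideal (𝓞 K), Q.IsPrime → Q ≠ ⊥ →
      ∀ p : ℕ, p.Prime → (p : 𝓞 K) ∈ Q → p ∉ S →
        vQ Q (Ideal.span {(a : 𝓞 K)}) = 0 ∧ vQ Q A = 0) ∧
    (∀ Q : Ideal (𝓞 K), Q.IsPrime → Q ≠ ⊥ →
      ∀ p : ℕ, p.Prime → (p : 𝓞 K) ∈ Q → p ∈ S →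
        vQ Q (Ideal.span {α}) = vQ Q A)

/-!
Take `a = N(A)`, which lies in `A`. A prime `Q` over `p ∉ S` cannot contain `a`, because
`p ∤ N(A)` and `Q ∩ ℤ = pℤ`; so `v_Q(a) = 0`, and `Q ∤ A` since `A ∋ a`. Conversely, a prime factor
`Q` of `A` contains `N(A)`, hence some prime divisor of `N(A)`, which lies in `S`. So the prime
factors of `m = ∏_{p ∈ S} p` include all primes over `S` and all prime factors of `A`; the Chinese
remainder theorem modulo `Q^(v_Q(A)+1)` for these `Q` yields `α` with `v_Q(α) = v_Q(A)` at each of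
them, and then `α ∈ ⋂ Q^(v_Q(A)) = A`.
-/

open UniqueFactorizationMonoid

namespace Ideal

variable {R : Type*} [CommRing R]

theorem IsPrime.exists_prime_dvd_of_natCast_mem {P : Ideal R} (hP : P.IsPrime) {n : ℕ}
    (hn : n ≠ 0) (h : (n : R) ∈ P) : ∃ p, p.Prime ∧ p ∣ n ∧ (p : R) ∈ P := by
  induction n using Nat.recOnMul with
  | zero => exact absurd rfl hn
  | one => exact absurd ((eq_top_iff_one P).mpr (by simpa using h)) hP.ne_top
  | prime p hp => exact ⟨p, hp, dvd_rfl, h⟩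
  | mul a b iha ihb =>
    obtain ⟨ha, hb⟩ := mul_ne_zero_iff.mp hn
    rcases hP.mem_or_mem (by simpa using h) with h | h
    · obtain ⟨p, hp, hpa, hpP⟩ := iha ha h
      exact ⟨p, hp, hpa.mul_right b, hpP⟩
    · obtain ⟨p, hp, hpb, hpP⟩ := ihb hb h
      exact ⟨p, hp, hpb.mul_left a, hpP⟩

theorem natCast_notMem_of_coprime {I : Ideal R} (hI : I ≠ ⊤) {m n : ℕ} (h : m.Coprime n)
    (hm : (m : R) ∈ I) : (n : R) ∉ I := fun hn => by
  obtain ⟨u, v, huv⟩ := h.cast (R := R)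
  exact hI <| (eq_top_iff_one I).mpr <| huv ▸ I.add_mem (I.mul_mem_left u hm) (I.mul_mem_left v hn)

variable [IsDedekindDomain R]

theorem mem_of_forall_mem_pow_count [DecidableEq (Ideal R)] {A : Ideal R} (hA : A ≠ ⊥) {x : R}
    (h : ∀ Q ∈ normalizedFactors A, x ∈ Q ^ (normalizedFactors A).count Q) : x ∈ A := by
  rw [← prod_normalizedFactors_eq_self hA, Finset.prod_multiset_count,
    ← IsDedekindDomain.inf_pow_eq_prod_of_prime _ _ _
      (fun Q hQ => prime_of_normalized_factor Q (Multiset.mem_toFinset.mp hQ))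
      fun _ _ _ _ => id]
  exact Submodule.mem_finsetInf.mpr fun Q hQ => h Q (Multiset.mem_toFinset.mp hQ)

theorem mem_normalizedFactors_span_prod_natCast [CharZero R] {S : Finset ℕ} (hS : 0 ∉ S)
    {Q : Ideal R} (hQ : Q.IsPrime) {p : ℕ} (hpS : p ∈ S) (hpQ : (p : R) ∈ Q) :
    Q ∈ normalizedFactors (span {((∏ q ∈ S, q : ℕ) : R)}) := by
  have hprod : span {((∏ q ∈ S, q : ℕ) : R)} ≠ ⊥ := by
    simpa [Finset.prod_eq_zero_iff] using hS
  rw [mem_normalizedFactors_iff hprod, span_singleton_le_iff_mem]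
  exact ⟨hQ, Q.mem_of_dvd (Nat.cast_dvd_cast (Finset.dvd_prod_of_mem _ hpS)) hpQ⟩

end Ideal

theorem IsDedekindDomain.exists_forall_mem_pow_notMem_pow_succ {R : Type*} [CommRing R]
    [IsDedekindDomain R] (T : Finset (Ideal R)) (hT : ∀ Q ∈ T, Prime Q) (e : Ideal R → ℕ) :
    ∃ x : R, ∀ Q ∈ T, x ∈ Q ^ e Q ∧ x ∉ Q ^ (e Q + 1) := by
  have exact_power (Q : T) : ∃ y : R, y ∈ Q.1 ^ e Q ∧ y ∉ Q.1 ^ (e Q + 1) :=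
    have := Ideal.isPrime_of_prime (hT Q Q.2)
    SetLike.exists_of_lt (Ideal.pow_succ_lt_pow (hT Q Q.2).ne_zero _)
  choose y hy using exact_power
  obtain ⟨x, hx⟩ := exists_forall_sub_mem_ideal id (e · + 1) hT (fun _ _ _ _ => id) y
  refine ⟨x, fun Q hQ => ⟨?_, fun hxQ => (hy ⟨Q, hQ⟩).2 ?_⟩⟩
  · simpa using add_mem (Ideal.pow_le_pow_right (Nat.le_succ _) (hx Q hQ)) (hy ⟨Q, hQ⟩).1
  · simpa using sub_mem hxQ (hx Q hQ)

theorem vQ_eq_count [DecidableEq (Ideal (𝓞 K))] (Q A : Ideal (𝓞 K)) :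
    vQ Q A = (normalizedFactors A).count Q := by
  unfold vQ
  congr

theorem vQ_eq_of_le_pow {Q A : Ideal (𝓞 K)} (hQ : Q.IsPrime) {n : ℕ} (hle : A ≤ Q ^ n)
    (hlt : ¬A ≤ Q ^ (n + 1)) : vQ Q A = n :=
  Ideal.count_normalizedFactors_eq (hp := hQ) hle hlt

theorem vQ_eq_zero_of_not_le {Q A : Ideal (𝓞 K)} (hQ : Q.IsPrime) (h : ¬A ≤ Q) : vQ Q A = 0 :=
  vQ_eq_of_le_pow hQ (by simp) (by simpa using h)

theorem vQ_span_singleton_eq {Q : Ideal (𝓞 K)} (hQ : Q.IsPrime) {n : ℕ} {x : 𝓞 K}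
    (hle : x ∈ Q ^ n) (hlt : x ∉ Q ^ (n + 1)) : vQ Q (Ideal.span {x}) = n :=
  vQ_eq_of_le_pow hQ ((Ideal.span_singleton_le_iff_mem _).mpr hle)
    (mt (Ideal.span_singleton_le_iff_mem _).mp hlt)

/-- Existence of an `S`-normal presentation for any nonzero ideal `A` whose norm has all its
prime divisors in the finite set `S` of rational primes. -/
theorem exists_sNormalPresentation
    (K : Type*) [Field K] [NumberField K]
    (S : Finset ℕ) (hS : ∀ p ∈ S, p.Prime)
    (A : Ideal (𝓞 K)) (hA : A ≠ ⊥)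
    (hnorm : ∀ p : ℕ, p.Prime → p ∣ Ideal.absNorm A → p ∈ S) :
    ∃ (a : ℕ) (α : 𝓞 K), IsSNormalPresentation S A a α := by
  classical
  set a := Ideal.absNorm A
  have ha : a ≠ 0 := mt Ideal.absNorm_eq_zero_iff.mp hA
  have haA : (a : 𝓞 K) ∈ A := Ideal.absNorm_mem A
  set T := (normalizedFactors (Ideal.span {((∏ p ∈ S, p : ℕ) : 𝓞 K)})).toFinset
  have mem_T (Q : Ideal (𝓞 K)) (hQ : Q.IsPrime) (p : ℕ) (hpS : p ∈ S) (hpQ : (p : 𝓞 K) ∈ Q) :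
      Q ∈ T :=
    Multiset.mem_toFinset.mpr <|
      Ideal.mem_normalizedFactors_span_prod_natCast (fun h => (hS 0 h).ne_zero rfl) hQ hpS hpQ
  have factor_mem_T (Q : Ideal (𝓞 K)) (hQA : Q ∈ normalizedFactors A) : Q ∈ T := by
    obtain ⟨hQ, hAQ⟩ := (Ideal.mem_normalizedFactors_iff hA).mp hQA
    obtain ⟨p, hp, hpa, hpQ⟩ := hQ.exists_prime_dvd_of_natCast_mem ha (hAQ haA)
    exact mem_T Q hQ p (hnorm p hp hpa) hpQ
  obtain ⟨α, hα⟩ := IsDedekindDomain.exists_forall_mem_pow_notMem_pow_succ T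
    (fun Q hQ => prime_of_normalized_factor Q (Multiset.mem_toFinset.mp hQ)) (vQ · A)
  refine ⟨a, α, Nat.pos_of_ne_zero ha, haA, ?_, ?_, ?_⟩
  · exact Ideal.mem_of_forall_mem_pow_count hA fun Q hQ =>
      vQ_eq_count Q A ▸ (hα Q (factor_mem_T Q hQ)).1
  · intro Q hQ _ p hp hpQ hpS
    have haQ : (a : 𝓞 K) ∉ Q := Ideal.natCast_notMem_of_coprime hQ.ne_top
      ((Nat.Prime.coprime_iff_not_dvd hp).mpr fun h => hpS (hnorm p hp h)) hpQ
    exact ⟨vQ_eq_zero_of_not_le hQ (by simpa [Ideal.span_singleton_le_iff_mem] using haQ),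
      vQ_eq_zero_of_not_le hQ fun h => haQ (h haA)⟩
  · intro Q hQ _ p _ hpQ hpS
    obtain ⟨hle, hlt⟩ := hα Q (mem_T Q hQ p hpS hpQ)
    exact vQ_span_singleton_eq hQ hle hlt
end

section
/- Let K have degree n over ℚ and let A = ⟨a, α⟩ be a nonzero ideal of 𝒪_K with an S-normal presentation (a, α). Then the absolute norm of A satisfies N(A) = gcd(aⁿ, |N_{K/ℚ}(α)|), where N_{K/ℚ}(α) is the field norm of α. -/
open NumberField

variable {K : Type*} [Field K] [NumberField K]

/-!
Since `α ∈ A`, write `(α) = A B`. A rational prime `p` dividing both `a` and `N(B)` would give a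
prime `Q ∣ B` over `p`: if `p ∈ S` then `v_Q(α) = v_Q(A) + v_Q(B) > v_Q(A)`, and if `p ∉ S` then
`Q ∣ (a)` although `v_Q(a) = 0`. Hence `a` is coprime to `N(B)`, and as `N(A) ∣ N(a) = aⁿ`,
`gcd(aⁿ, N(α)) = gcd(aⁿ, N(A) N(B)) = gcd(aⁿ, N(A)) = N(A)`. When `α = 0`, simply `A = (a)`.
-/

open Ideal

lemma vQ_mul {Q A B : Ideal (𝓞 K)} (hA : A ≠ ⊥) (hB : B ≠ ⊥) :
    vQ Q (A * B) = vQ Q A + vQ Q B := by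
  rw [vQ, vQ, vQ, UniqueFactorizationMonoid.normalizedFactors_mul hA hB, Multiset.count_add]

lemma vQ_pos_iff {Q X : Ideal (𝓞 K)} (hX : X ≠ ⊥) : 0 < vQ Q X ↔ Q.IsPrime ∧ X ≤ Q := by
  rw [vQ, Multiset.count_pos, mem_normalizedFactors_iff hX]

lemma natCast_mem_of_under_eq_span {R : Type*} [CommRing R] {P : Ideal R} {p : ℕ}
    (h : P.under ℤ = span {(p : ℤ)}) : (p : R) ∈ P := by
  have hp : (p : ℤ) ∈ P.under ℤ := h ▸ mem_span_singleton_self _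
  simpa using hp

lemma IsSNormalPresentation.coprime_absNorm_of_span_eq_mul {S : Finset ℕ} {A B : Ideal (𝓞 K)}
    {a : ℕ} {α : 𝓞 K} (hpres : IsSNormalPresentation S A a α) (hα : α ≠ 0)
    (hAB : span {α} = A * B) : a.Coprime (absNorm B) := by
  obtain ⟨ha, -, -, hout, hin⟩ := hpres
  have hαbot : span {α} ≠ ⊥ := by simpa using hα
  have hA : A ≠ ⊥ := fun h ↦ hαbot (by rw [hAB, h, bot_mul])
  have hB : B ≠ ⊥ := fun h ↦ hαbot (by rw [hAB, h, mul_bot])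
  refine Nat.coprime_of_dvd fun p hp hpa hpB ↦ ?_
  obtain ⟨Q, hQmax, hQp, hQB⟩ := exists_isMaximal_dvd_of_dvd_absNorm' hp B hpB
  have hpQ := natCast_mem_of_under_eq_span hQp
  have hBQ : B ≤ Q := le_of_dvd hQB
  have hQ : Q ≠ ⊥ := ne_bot_of_le_ne_bot hB hBQ
  by_cases hpS : p ∈ S
  · have hvB := (vQ_pos_iff hB).mpr ⟨hQmax.isPrime, hBQ⟩
    have hv := hin Q hQmax.isPrime hQ p hp hpQ hpS
    rw [hAB, vQ_mul hA hB] at hv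
    omega
  · have haQ : span {(a : 𝓞 K)} ≤ Q := by
      obtain ⟨c, rfl⟩ := hpa
      rw [span_singleton_le_iff_mem, Nat.cast_mul]
      exact Q.mul_mem_right _ hpQ
    have hva := (vQ_pos_iff (by simpa using ha.ne')).mpr ⟨hQmax.isPrime, haQ⟩
    have := (hout Q hQmax.isPrime hQ p hp hpQ hpS).1
    omega

theorem absNorm_eq_gcd_of_sNormalPresentation_general
    (K : Type*) [Field K] [NumberField K]
    (n : ℕ) (hn : Module.finrank ℚ K = n)
    (S : Finset ℕ)
    (A : Ideal (𝓞 K))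
    (a : ℕ) (α : 𝓞 K)
    (hpres : IsSNormalPresentation S A a α)
    (hgen : A = Ideal.span {(a : 𝓞 K), α}) :
    Ideal.absNorm A = Nat.gcd (a ^ n) ((Algebra.norm ℤ α).natAbs) := by
  have hNa : absNorm (span {(a : 𝓞 K)}) = a ^ n := by
    rw [absNorm_span_natCast, RingOfIntegers.rank, hn]
  rcases eq_or_ne α 0 with rfl | hα
  · rw [hgen, span_pair_zero, hNa, Algebra.norm_zero, Int.natAbs_zero, Nat.gcd_zero_right]
  have ⟨_, haA, hαA, _, _⟩ := hpres
  obtain ⟨B, hAB⟩ := dvd_iff_le.mpr ((span_singleton_le_iff_mem A).mpr hαA)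
  have hcop : (absNorm B).Coprime (a ^ n) :=
    (hpres.coprime_absNorm_of_span_eq_mul hα hAB).symm.pow_right n
  have hNA : absNorm A ∣ a ^ n :=
    hNa ▸ absNorm_dvd_absNorm_of_le ((span_singleton_le_iff_mem A).mpr haA)
  rw [← absNorm_span_singleton, hAB, map_mul, Nat.Coprime.gcd_mul_right_cancel_right _ hcop,
    Nat.gcd_eq_right hNA]

/-- If `A = ⟨a, α⟩` has `S`-normal presentation `(a, α)` and `K` has degree `n`, then
`N(A) = gcd(aⁿ, |N_{K/ℚ}(α)|)`. -/
theorem absNorm_eq_gcd_of_sNormalPresentation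
    (K : Type*) [Field K] [NumberField K]
    (n : ℕ) (hn : Module.finrank ℚ K = n)
    (S : Finset ℕ) (hS : ∀ p ∈ S, p.Prime)
    (A : Ideal (𝓞 K)) (hA : A ≠ ⊥)
    (a : ℕ) (α : 𝓞 K)
    (hpres : IsSNormalPresentation S A a α)
    (hgen : A = Ideal.span {(a : 𝓞 K), α}) :
    Ideal.absNorm A = Nat.gcd (a ^ n) ((Algebra.norm ℤ α).natAbs) :=
  absNorm_eq_gcd_of_sNormalPresentation_general K n hn S A a α hpres hgen
end
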